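/- Let A_0, …, A_m, X, Y be FDDS and suppose the coefficient type of A_i is nonempty for at least one i with 1 ≤ i ≤ m. Let P(·) denote the polynomial Σ_{i=0}^m A_i ·^i evaluated on FDDS. If the unroll U(P(X)) is isomorphic to the unroll U(P(Y)), then U(X) is isomorphic to U(Y). (All univariate polynomials over unrolls are injective.) -/

import Mathlib

/-- Isomorphism of finite dynamical systems: a bijection commuting with the maps. -/
def FddsIso {α β : Type} (f : α → α) (g : β → β) : Prop :=
  ∃ e : α ≃ β, ⇑e ∘ f = g ∘ ⇑e

/-- A state is periodic if some positive iterate fixes it. -/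
def IsPeriodicState {α : Type} (f : α → α) (x : α) : Prop :=
  ∃ n > 0, f^[n] x = x

/-- The vertex set of the unroll of `(α, f)`. -/
def UnrollSet {α : Type} (f : α → α) : Set (α × ℕ) :=
  {p | IsPeriodicState f (f^[p.2] p.1)}

/-- The parent map of the unroll. -/
def unrollMap {α : Type} (f : α → α) (q : UnrollSet f) : UnrollSet f :=
  if h : q.1.2 = 0 then q
  else ⟨(f q.1.1, q.1.2 - 1), by
    obtain ⟨⟨x, k⟩, hq⟩ := q
    simp only at h
    obtain ⟨k', rfl⟩ := Nat.exists_eq_succ_of_ne_zero h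
    simpa [UnrollSet, Function.iterate_succ_apply] using hq⟩

/-- Isomorphism of unrolls. -/
def UnrollIso {α β : Type} (f : α → α) (g : β → β) : Prop :=
  ∃ φ : UnrollSet f ≃ UnrollSet g, ⇑φ ∘ unrollMap f = unrollMap g ∘ ⇑φ

/-- Vertices of the cut at depth `n` of the unroll. -/
def CutSet {α : Type} (f : α → α) (n : ℕ) : Set (α × ℕ) :=
  {p | p ∈ UnrollSet f ∧ p.2 ≤ n}

/-- The parent map of the cut at depth `n`. -/
def cutMap {α : Type} (f : α → α) (n : ℕ) (q : CutSet f n) : CutSet f n :=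
  if h : q.1.2 = 0 then q
  else ⟨(f q.1.1, q.1.2 - 1), by
    obtain ⟨⟨x, k⟩, hq⟩ := q
    obtain ⟨hq1, hq2⟩ := hq
    simp only at h hq2 ⊢
    obtain ⟨k', rfl⟩ := Nat.exists_eq_succ_of_ne_zero h
    refine ⟨by simpa [UnrollSet, Function.iterate_succ_apply] using hq1, by omega⟩⟩

/-- Isomorphism of cuts at depth `n`. -/
def CutIso {α β : Type} (f : α → α) (g : β → β) (n : ℕ) : Prop :=
  ∃ φ : CutSet f n ≃ CutSet g n, ⇑φ ∘ cutMap f n = cutMap g n ∘ ⇑φ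

/-- The states of the components whose cycle length divides `p`. -/
def DivSet {α : Type} (f : α → α) (p : ℕ) : Set α :=
  {x | ∃ N, f^[N + p] x = f^[N] x}

/-- The restriction of `f` to `DivSet f p`. -/
def divMap {α : Type} (f : α → α) (p : ℕ) (q : DivSet f p) : DivSet f p :=
  ⟨f q.1, by
    obtain ⟨x, N, hN⟩ := q
    exact ⟨N, by
      rw [← Function.iterate_succ_apply, ← Function.iterate_succ_apply,
        Function.iterate_succ_apply', Function.iterate_succ_apply', hN]⟩⟩

/-- `k`-th power of an FDDS: map on `Fin k → α`. -/
def powMap {α : Type} (f : α → α) (k : ℕ) (v : Fin k → α) : Fin k → α := f ∘ v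

/-- Evaluation of the polynomial `Σ_{i=0}^m A_i X^i` at `(α, f)`. -/
def polyEval {m : ℕ} {γ : Fin (m + 1) → Type} (g : ∀ i, γ i → γ i)
    {α : Type} (f : α → α)
    (x : Σ i : Fin (m + 1), γ i × (Fin i.val → α)) :
    Σ i : Fin (m + 1), γ i × (Fin i.val → α) :=
  ⟨x.1, g x.1 x.2.1, f ∘ x.2.2⟩

/-- Evaluation of the constant-free polynomial `Σ_{i=1}^m A_i X^i` at `(α, f)`. -/
def polyEvalNC {m : ℕ} {γ : Fin m → Type} (g : ∀ i, γ i → γ i)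
    {α : Type} (f : α → α)
    (x : Σ i : Fin m, γ i × (Fin (i.val + 1) → α)) :
    Σ i : Fin m, γ i × (Fin (i.val + 1) → α) :=
  ⟨x.1, g x.1 x.2.1, f ∘ x.2.2⟩

/-- An FDDS is cancelable if it can be canceled from products. -/
def Cancelable {α : Type} (f : α → α) : Prop :=
  ∀ (β γ : Type) [Fintype β] [Fintype γ] (g : β → β) (h : γ → γ),
    FddsIso (Prod.map f g) (Prod.map f h) → FddsIso g h

/-!
For a finite rooted tree `t` and a state `x`, count the homomorphisms from `t` into the in-tree
of `x` (root to `x`, children to preimages of the parent's image). These counts are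
multiplicative when trees are glued at their roots, so for each state they form a character of
the free monoid on trees. Dedekind's independence of characters turns equal sums of counts over
two fibres into a count-preserving bijection between the fibres; starting from the periodic
points (the roots of the unroll) and extending level by level, this shows that `U(X) ≅ U(Y)`
iff `hom(t, X) = hom(t, Y)` for every tree `t`, where `hom(t, X)` sums the counts over the
periodic points. Finally `hom(t, P(X)) = Σ hom(t, Aᵢ) hom(t, X)ⁱ`, and since some `Aᵢ` with
`i ≥ 1` is nonempty, hence has a periodic point and `hom(t, Aᵢ) > 0`, this is strictly
increasing in `hom(t, X)`.
-/

open Function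

theorem exists_equiv_forall_eq_of_sum_monoidHom_eq {G L X Y : Type*} [MulOneClass G]
    [CommRing L] [IsDomain L] [CharZero L] [Fintype X] [Fintype Y]
    {c : X → G →* L} {d : Y → G →* L} (h : ∀ a, ∑ x, c x a = ∑ y, d y a) :
    ∃ e : X ≃ Y, ∀ x, d (e x) = c x := by
  classical
  have hcoeff : ∑ x, Finsupp.single (c x) (1 : L) = ∑ y, Finsupp.single (d y) 1 := by
    apply linearIndependent_monoidHom G L
    ext a
    simp [map_sum, Finsupp.linearCombination_single, Finset.sum_apply, h]
  have hcard : ∀ χ, Fintype.card {x // c x = χ} = Fintype.card {y // d y = χ} := by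
    intro χ
    have := congrArg (· χ) hcoeff
    simp only [Finsupp.coe_finsetSum, Finset.sum_apply, Finsupp.single_apply] at this
    simpa [Fintype.card_subtype, Finset.sum_boole] using this
  exact ⟨Equiv.ofFiberEquiv fun χ => Fintype.equivOfCardEq (hcard χ),
    Equiv.ofFiberEquiv_map _⟩

theorem Function.periodicPts_nonempty {α : Type*} [Finite α] [Nonempty α] (f : α → α) :
    (periodicPts f).Nonempty := by
  obtain ⟨x⟩ := ‹Nonempty α›
  obtain ⟨a, b, hne, heq⟩ := Finite.exists_ne_map_eq_of_infinite (f^[·] x)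
  wlog hab : a < b generalizing a b
  · exact this b a hne.symm heq.symm (by omega)
  refine ⟨f^[a] x, mk_mem_periodicPts (Nat.sub_pos_of_lt hab) ?_⟩
  rw [IsPeriodicPt, IsFixedPt, ← iterate_add_apply, Nat.sub_add_cancel hab.le]
  exact heq.symm

theorem sum_mul_pow_strictMono {n : ℕ} (a : Fin n → ℕ) {i₀ : Fin n} (hi₀ : i₀.val ≠ 0)
    (ha : 0 < a i₀) : StrictMono fun z : ℕ => ∑ i, a i * z ^ i.val := fun _ _ hz =>
  Finset.sum_lt_sum (fun _ _ => Nat.mul_le_mul_left _ (Nat.pow_le_pow_left hz.le _))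
    ⟨i₀, Finset.mem_univ _, Nat.mul_lt_mul_of_pos_left (Nat.pow_lt_pow_left hz hi₀) ha⟩

theorem Equiv.semiconj_apply_eq_iff {A B : Type*} {p : A → A} {p' : B → B} (φ : A ≃ B)
    (hφ : Semiconj φ p p') (a a' : A) : p' (φ a) = φ a' ↔ p a = a' := by
  rw [← hφ, φ.apply_eq_iff_eq]

inductive PlaneTree : Type
  | node : List PlaneTree → PlaneTree

section HomCount

variable {α β : Type} [Fintype α] [Fintype β] [DecidableEq α] [DecidableEq β]

mutual
/-- The number of maps from the vertices of `t` to `α` sending the root to `x` and every child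
to an `f`-preimage of the image of its parent. -/
noncomputable def homCount (f : α → α) : PlaneTree → α → ℕ
  | .node ts, x => forestCount f ts x
noncomputable def forestCount (f : α → α) : List PlaneTree → α → ℕ
  | [], _ => 1
  | t :: ts, x => (∑ y : {y // f y = x}, homCount f t y) * forestCount f ts x
end

variable {f : α → α} {g : β → β}

theorem forestCount_append (ts us : List PlaneTree) (x : α) :
    forestCount f (ts ++ us) x = forestCount f ts x * forestCount f us x := by
  induction ts with
  | nil => simp [forestCount]
  | cons t ts ih => simp only [List.cons_append, forestCount, ih, mul_assoc]

theorem forestCount_cons (t : PlaneTree) (ts : List PlaneTree) (x : α) :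
    forestCount f (t :: ts) x = forestCount f [t] x * forestCount f ts x :=
  forestCount_append [t] ts x

variable (f) in
noncomputable def forestCountHom (x : α) : FreeMonoid PlaneTree →* ℤ where
  toFun ts := forestCount f ts.toList x
  map_one' := by simp [forestCount]
  map_mul' ts us := by simp [forestCount_append]

def IsFiberBisim (f : α → α) (g : β → β) (R : α → β → Prop) : Prop :=
  ∀ a b, R a b → ∃ e : {x // f x = a} ≃ {y // g y = b}, ∀ x : {x // f x = a}, R x (e x)

mutual
theorem homCount_eq_of_isFiberBisim {R : α → β → Prop} (hR : IsFiberBisim f g R) :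
    ∀ (t : PlaneTree) {a b}, R a b → homCount f t a = homCount g t b
  | .node ts, _, _, hab => forestCount_eq_of_isFiberBisim hR ts hab
theorem forestCount_eq_of_isFiberBisim {R : α → β → Prop} (hR : IsFiberBisim f g R) :
    ∀ (ts : List PlaneTree) {a b}, R a b → forestCount f ts a = forestCount g ts b
  | [], _, _, _ => rfl
  | t :: ts, a, b, hab => by
    obtain ⟨e, he⟩ := hR a b hab
    exact congrArg₂ (· * ·)
      (Fintype.sum_equiv e _ _ fun x => homCount_eq_of_isFiberBisim hR t (he x))
      (forestCount_eq_of_isFiberBisim hR ts hab)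
end

theorem exists_equiv_homCount_eq_of_sum_eq {X Y : Type} [Fintype X] [Fintype Y]
    (u : X → α) (v : Y → β)
    (h : ∀ t, ∑ x, homCount f t (u x) = ∑ y, homCount g t (v y)) :
    ∃ e : X ≃ Y, ∀ x t, homCount f t (u x) = homCount g t (v (e x)) := by
  have hsum : ∀ ts : FreeMonoid PlaneTree,
      ∑ x, forestCountHom f (u x) ts = ∑ y, forestCountHom g (v y) ts := fun ts => by
    simp only [forestCountHom, MonoidHom.coe_mk, OneHom.coe_mk]
    exact_mod_cast h (.node ts.toList)
  obtain ⟨e, he⟩ := exists_equiv_forall_eq_of_sum_monoidHom_eq hsum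
  refine ⟨e, fun x ⟨ts⟩ => ?_⟩
  simpa [forestCountHom, homCount] using (DFunLike.congr_fun (he x) (FreeMonoid.ofList ts)).symm

theorem isFiberBisim_homCount_eq :
    IsFiberBisim f g fun a b => ∀ t, homCount f t a = homCount g t b := by
  intro a b hab
  refine exists_equiv_homCount_eq_of_sum_eq (f := f) (g := g)
    (X := {x // f x = a}) (Y := {y // g y = b}) Subtype.val Subtype.val fun t => ?_
  simpa [homCount, forestCount] using hab (.node [t])

mutual
theorem homCount_pos : ∀ (t : PlaneTree) {x : α}, x ∈ periodicPts f → 0 < homCount f t x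
  | .node ts, _, hx => forestCount_pos ts hx
theorem forestCount_pos :
    ∀ (ts : List PlaneTree) {x : α}, x ∈ periodicPts f → 0 < forestCount f ts x
  | [], _, _ => Nat.one_pos
  | t :: ts, _, hx => by
    obtain ⟨y, hy, rfl⟩ := (bijOn_periodicPts f).surjOn hx
    refine Nat.mul_pos (Finset.sum_pos' (fun _ _ => Nat.zero_le _)
      ⟨⟨y, rfl⟩, Finset.mem_univ _, homCount_pos t hy⟩) (forestCount_pos ts hx)
end

end HomCount

section Unroll

variable {α β : Type} {f : α → α} {g : β → β}

theorem unrollMap_val_of_ne_zero (q : UnrollSet f) (h : q.1.2 ≠ 0) :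
    (unrollMap f q).1 = (f q.1.1, q.1.2 - 1) := by
  rw [unrollMap, dif_neg h]

theorem unrollMap_eq_self_iff (q : UnrollSet f) : unrollMap f q = q ↔ q.1.2 = 0 := by
  refine ⟨fun h => by_contra fun hq => ?_, fun h => dif_pos h⟩
  have := congrArg (·.1.2) h
  simp only [unrollMap_val_of_ne_zero q hq] at this
  omega

theorem unrollMap_eq_and_ne_iff (q q' : UnrollSet f) :
    unrollMap f q' = q ∧ q' ≠ q ↔ f q'.1.1 = q.1.1 ∧ q'.1.2 = q.1.2 + 1 := by
  by_cases h0 : q'.1.2 = 0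
  · rw [show unrollMap f q' = q' from dif_pos h0, h0]
    constructor
    · rintro ⟨h, hne⟩
      exact absurd h hne
    · rintro ⟨-, h⟩
      omega
  · rw [Subtype.ext_iff, unrollMap_val_of_ne_zero q' h0, Prod.ext_iff]
    constructor
    · rintro ⟨⟨hx, hk⟩, -⟩
      exact ⟨hx, by simp only at hk; omega⟩
    · rintro ⟨hx, hk⟩
      refine ⟨⟨hx, by simp only; omega⟩, fun h => ?_⟩
      rw [h] at hk
      omega

variable (f) in
def unrollRootEquiv : periodicPts f ≃ {q : UnrollSet f // unrollMap f q = q} where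
  toFun x := ⟨⟨(x.1, 0), x.2⟩, dif_pos rfl⟩
  invFun q := ⟨q.1.1.1, by
    obtain ⟨⟨⟨x, k⟩, hq⟩, hfix⟩ := q
    obtain rfl : k = 0 := (unrollMap_eq_self_iff _).1 hfix
    exact hq⟩
  left_inv _ := rfl
  right_inv q := by
    ext : 2
    exact Prod.ext rfl ((unrollMap_eq_self_iff q.1).1 q.2).symm

def unrollChild (q : UnrollSet f) (y : {y // f y = q.1.1}) : UnrollSet f :=
  ⟨(y.1, q.1.2 + 1), by
    show IsPeriodicState f (f^[q.1.2] (f y.1))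
    rw [y.2]
    exact q.2⟩

def unrollChildEquiv (q : UnrollSet f) :
    {y // f y = q.1.1} ≃ {q' : UnrollSet f // unrollMap f q' = q ∧ q' ≠ q} where
  toFun y := ⟨unrollChild q y, (unrollMap_eq_and_ne_iff q _).2 ⟨y.2, rfl⟩⟩
  invFun q' := ⟨q'.1.1.1, ((unrollMap_eq_and_ne_iff q q'.1).1 q'.2).1⟩
  left_inv _ := rfl
  right_inv q' := by
    ext : 2
    exact Prod.ext rfl ((unrollMap_eq_and_ne_iff q q'.1).1 q'.2).2.symm

variable (f) in
def unrollSigmaEquiv : UnrollSet f ≃ Σ k : ℕ, {x // (x, k) ∈ UnrollSet f} where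
  toFun q := ⟨q.1.2, q.1.1, q.2⟩
  invFun p := ⟨(p.2.1, p.1), p.2.2⟩
  left_inv _ := rfl
  right_inv _ := rfl

variable (f) in
def unrollLevelSuccEquiv (k : ℕ) :
    {x // (x, k + 1) ∈ UnrollSet f} ≃
      Σ p : {x // (x, k) ∈ UnrollSet f}, {y // f y = p.1} where
  toFun x := ⟨⟨f x, x.2⟩, x.1, rfl⟩
  invFun p := ⟨p.2.1, show IsPeriodicState f (f^[k] (f p.2.1)) by rw [p.2.2]; exact p.1.2⟩
  left_inv _ := rfl
  right_inv := by
    rintro ⟨⟨x, hx⟩, y, hy⟩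
    change f y = x at hy
    subst hy
    rfl

/-- Level `k + 1` of the unroll is the union of the fibres over level `k`; related fibres are
matched along `R`. -/
noncomputable def unrollLevelEquiv {R : α → β → Prop}
    (e : ∀ a b, R a b → {x // f x = a} ≃ {y // g y = b})
    (he : ∀ a b h (x : {x // f x = a}), R x (e a b h x))
    (σ : periodicPts f ≃ periodicPts g) (hσ : ∀ x : periodicPts f, R x (σ x)) :
    ∀ k, {E : {x // (x, k) ∈ UnrollSet f} ≃ {y // (y, k) ∈ UnrollSet g} //
      ∀ x : {x // (x, k) ∈ UnrollSet f}, R x (E x)}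
  | 0 => ⟨σ, hσ⟩
  | k + 1 =>
    let E := unrollLevelEquiv e he σ hσ k
    ⟨(unrollLevelSuccEquiv f k).trans
      ((Equiv.sigmaCongr E.1 fun p => e p.1 (E.1 p).1 (E.2 p)).trans
        (unrollLevelSuccEquiv g k).symm),
      fun x => he (f x) (E.1 ⟨f x, x.2⟩) (E.2 ⟨f x, x.2⟩) ⟨x, rfl⟩⟩

theorem unrollIso_of_isFiberBisim {R : α → β → Prop} (hR : IsFiberBisim f g R)
    (σ : periodicPts f ≃ periodicPts g) (hσ : ∀ x : periodicPts f, R x (σ x)) :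
    UnrollIso f g := by
  choose e he using hR
  let E k := (unrollLevelEquiv e he σ hσ k).1
  have hE : ∀ k x, g (E (k + 1) x).1 = (E k ⟨f x, x.2⟩).1 := fun k x =>
    (e _ _ ((unrollLevelEquiv e he σ hσ k).2 ⟨f x, x.2⟩) ⟨x.1, rfl⟩).2
  refine ⟨(unrollSigmaEquiv f).trans ((Equiv.sigmaCongrRight E).trans (unrollSigmaEquiv g).symm),
    funext fun ⟨⟨x, k⟩, hq⟩ => ?_⟩
  cases k with
  | zero =>
    rw [comp_apply, (unrollMap_eq_self_iff ⟨(x, 0), hq⟩).2 rfl]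
    exact ((unrollMap_eq_self_iff _).2 rfl).symm
  | succ k =>
    have hmap : unrollMap f ⟨(x, k + 1), hq⟩ = ⟨(f x, k), hq⟩ :=
      Subtype.ext (unrollMap_val_of_ne_zero _ k.succ_ne_zero)
    rw [comp_apply, comp_apply, hmap]
    ext : 1
    rw [unrollMap_val_of_ne_zero _ k.succ_ne_zero]
    exact Prod.ext (hE k ⟨x, hq⟩).symm rfl

variable [Fintype α] [Fintype β] [DecidableEq α] [DecidableEq β]

/-- The number of homomorphisms from `t` into the unroll forest of `f` that send the root of
`t` to a root. -/
noncomputable def unrollHomCount (f : α → α) (t : PlaneTree) : ℕ :=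
  open scoped Classical in ∑ x : periodicPts f, homCount f t x

theorem unrollHomCount_eq_of_unrollIso (h : UnrollIso f g) (t : PlaneTree) :
    unrollHomCount f t = unrollHomCount g t := by
  classical
  obtain ⟨φ, hφ⟩ := h
  replace hφ : Semiconj φ (unrollMap f) (unrollMap g) := semiconj_iff_comp_eq.2 hφ
  let σ : periodicPts f ≃ periodicPts g := (unrollRootEquiv f).trans
    ((φ.subtypeEquiv fun q => (φ.semiconj_apply_eq_iff hφ q q).symm).trans
      (unrollRootEquiv g).symm)
  have hR : IsFiberBisim f g fun a b => ∃ q : UnrollSet f, q.1.1 = a ∧ (φ q).1.1 = b := by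
    rintro _ _ ⟨q, rfl, rfl⟩
    refine ⟨(unrollChildEquiv q).trans
      ((φ.subtypeEquiv fun q' => ?_).trans (unrollChildEquiv (φ q)).symm),
      fun y => ⟨unrollChild q y, rfl, rfl⟩⟩
    rw [φ.semiconj_apply_eq_iff hφ, φ.injective.ne_iff]
  exact Fintype.sum_equiv σ _ _ fun x => homCount_eq_of_isFiberBisim hR t ⟨_, rfl, rfl⟩

theorem unrollIso_iff_unrollHomCount_eq :
    UnrollIso f g ↔ ∀ t, unrollHomCount f t = unrollHomCount g t := by
  classical
  refine ⟨unrollHomCount_eq_of_unrollIso, fun h => ?_⟩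
  obtain ⟨σ, hσ⟩ := exists_equiv_homCount_eq_of_sum_eq (f := f) (g := g)
    (X := periodicPts f) (Y := periodicPts g) Subtype.val Subtype.val h
  exact unrollIso_of_isFiberBisim isFiberBisim_homCount_eq σ hσ

theorem unrollHomCount_pos [Nonempty α] (f : α → α) (t : PlaneTree) :
    0 < unrollHomCount f t := by
  classical
  obtain ⟨x, hx⟩ := periodicPts_nonempty f
  exact Finset.sum_pos' (fun _ _ => Nat.zero_le _)
    ⟨⟨x, hx⟩, Finset.mem_univ _, homCount_pos t hx⟩

end Unroll

section Polynomial

variable {m : ℕ} {γ : Fin (m + 1) → Type} {g : ∀ i, γ i → γ i}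
  {α : Type} {f : α → α}

theorem polyEval_iterate (n : ℕ) (i : Fin (m + 1)) (c : γ i) (v : Fin i → α) :
    (polyEval g f)^[n] ⟨i, c, v⟩ = ⟨i, (g i)^[n] c, f^[n] ∘ v⟩ := by
  induction n with
  | zero => rfl
  | succ n ih => rw [iterate_succ_apply', ih, iterate_succ', iterate_succ']; rfl

theorem mem_periodicPts_polyEval_iff [∀ i, Fintype (γ i)] [Fintype α] {i : Fin (m + 1)}
    {c : γ i} {v : Fin i → α} :
    ⟨i, c, v⟩ ∈ periodicPts (polyEval g f) ↔
      c ∈ periodicPts (g i) ∧ ∀ j, v j ∈ periodicPts f := by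
  constructor
  · rintro ⟨n, hn, h⟩
    rw [IsPeriodicPt, IsFixedPt, polyEval_iterate] at h
    obtain ⟨hc, hv⟩ := Prod.ext_iff.1 (eq_of_heq (Sigma.mk.inj_iff.1 h).2)
    exact ⟨⟨n, hn, hc⟩, fun j => ⟨n, hn, congrFun hv j⟩⟩
  · rintro ⟨hc, hv⟩
    let N := (Fintype.card (γ i)).factorial * (Fintype.card α).factorial
    have hc' : IsPeriodicPt (g i) N c :=
      (isPeriodicPt_factorial_card_of_mem_periodicPts hc).mul_const _
    have hv' : f^[N] ∘ v = v := funext fun j =>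
      ((isPeriodicPt_factorial_card_of_mem_periodicPts (hv j)).const_mul _).eq
    refine mk_mem_periodicPts (n := N) (by positivity) ?_
    rw [IsPeriodicPt, IsFixedPt, polyEval_iterate, hc'.eq, hv']

def periodicPtsPolyEvalEquiv [∀ i, Fintype (γ i)] [Fintype α] :
    (Σ i : Fin (m + 1), periodicPts (g i) × (Fin i → periodicPts f)) ≃
      periodicPts (polyEval g f) where
  toFun p := ⟨⟨p.1, p.2.1, fun j => p.2.2 j⟩,
    mem_periodicPts_polyEval_iff.2 ⟨p.2.1.2, fun j => (p.2.2 j).2⟩⟩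
  invFun w := ⟨w.1.1, ⟨w.1.2.1, (mem_periodicPts_polyEval_iff.1 w.2).1⟩,
    fun j => ⟨w.1.2.2 j, (mem_periodicPts_polyEval_iff.1 w.2).2 j⟩⟩
  left_inv _ := rfl
  right_inv _ := rfl

noncomputable def polyEvalFiberEquiv (i : Fin (m + 1)) (c : γ i) (v : Fin i → α) :
    {c' // g i c' = c} × (∀ j, {y // f y = v j}) ≃ {w // polyEval g f w = ⟨i, c, v⟩} :=
  Equiv.ofBijective
    (fun p => ⟨⟨i, p.1, fun j => p.2 j⟩,
      Sigma.ext rfl (heq_of_eq (Prod.ext p.1.2 (funext fun j => (p.2 j).2)))⟩)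
    ⟨fun p p' h => by
      obtain ⟨hc, hv⟩ :=
        Prod.ext_iff.1 (eq_of_heq (Sigma.mk.inj_iff.1 (congrArg Subtype.val h)).2)
      exact Prod.ext (Subtype.ext hc) (funext fun j => Subtype.ext (congrFun hv j)),
    fun ⟨⟨i', c', v'⟩, hw⟩ => by
      obtain rfl : i' = i := congrArg Sigma.fst hw
      obtain ⟨hc, hv⟩ := Prod.ext_iff.1 (eq_of_heq (Sigma.mk.inj_iff.1 hw).2)
      exact ⟨(⟨c', hc⟩, fun j => ⟨v' j, congrFun hv j⟩), rfl⟩⟩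

variable [∀ i, Fintype (γ i)] [Fintype α] [∀ i, DecidableEq (γ i)] [DecidableEq α]

mutual
theorem homCount_polyEval : ∀ (t : PlaneTree) (i : Fin (m + 1)) (c : γ i) (v : Fin i → α),
    homCount (polyEval g f) t ⟨i, c, v⟩ = homCount (g i) t c * ∏ j, homCount f t (v j)
  | .node ts, i, c, v => forestCount_polyEval ts i c v
theorem forestCount_polyEval :
    ∀ (ts : List PlaneTree) (i : Fin (m + 1)) (c : γ i) (v : Fin i → α),
      forestCount (polyEval g f) ts ⟨i, c, v⟩ =
        forestCount (g i) ts c * ∏ j, forestCount f ts (v j)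
  | [], _, _, _ => by simp [forestCount]
  | t :: ts, i, c, v => by
    have hfiber : forestCount (polyEval g f) [t] ⟨i, c, v⟩ =
        forestCount (g i) [t] c * ∏ j, forestCount f [t] (v j) := by
      simp only [forestCount, mul_one]
      rw [← Fintype.sum_equiv (polyEvalFiberEquiv i c v) _ _ fun _ => rfl,
        Fintype.sum_prod_type, Fintype.prod_sum, Fintype.sum_mul_sum]
      exact Fintype.sum_congr _ _ fun c' => Fintype.sum_congr _ _ fun v' =>
        homCount_polyEval t i _ _
    rw [forestCount_cons t ts, hfiber, forestCount_polyEval ts, forestCount_cons t ts c,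
      Finset.prod_congr rfl fun j _ => forestCount_cons t ts (v j), Finset.prod_mul_distrib]
    ring
end

theorem unrollHomCount_polyEval (t : PlaneTree) :
    unrollHomCount (polyEval g f) t =
      ∑ i, unrollHomCount (g i) t * unrollHomCount f t ^ i.val := by
  classical
  rw [unrollHomCount, ← Fintype.sum_equiv periodicPtsPolyEvalEquiv _ _ fun _ => rfl,
    Fintype.sum_sigma]
  refine Fintype.sum_congr _ _ fun i => ?_
  rw [Fintype.sum_prod_type, unrollHomCount, unrollHomCount, Fintype.sum_pow,
    Fintype.sum_mul_sum]
  exact Fintype.sum_congr _ _ fun c => Fintype.sum_congr _ _ fun v => homCount_polyEval t i _ _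

end Polynomial

/-- All univariate polynomials over unrolls are injective: if some
non-constant coefficient `A_i` (with `1 ≤ i ≤ m`) has a nonempty state set and the
unrolls of `P(X)` and `P(Y)` are isomorphic, then the unrolls of `X` and `Y` are
isomorphic. -/
theorem unroll_poly_injective {m : ℕ} {γ : Fin (m + 1) → Type} [∀ i, Fintype (γ i)]
    (g : ∀ i, γ i → γ i)
    (hne : ∃ i : Fin (m + 1), 1 ≤ i.val ∧ Nonempty (γ i))
    {α β : Type} [Fintype α] [Fintype β] (f : α → α) (f' : β → β)
    (h : UnrollIso (polyEval g f) (polyEval g f')) :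
    UnrollIso f f' := by
  classical
  obtain ⟨i₀, hi₀, hγ⟩ := hne
  refine unrollIso_iff_unrollHomCount_eq.2 fun t => ?_
  have hP := unrollIso_iff_unrollHomCount_eq.1 h t
  rw [unrollHomCount_polyEval, unrollHomCount_polyEval] at hP
  exact (sum_mul_pow_strictMono _ (by omega) (unrollHomCount_pos (g i₀) t)).injective hP
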